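/- Let q be a prime power and γ = 7/11. There is a constant C depending only on q such that for every nonzero n ∈ F_q[t] with deg n sufficiently large, ∑_{x1 nonzero} q^{-γ deg x1} · (∑_{x2, x3 nonzero, x2 + x3 = n - x1} q^{-γ(deg x2 + deg x3)})^2 ≤ C·q^{(3 - 5γ) deg n} = C·q^{-(2/11) deg n}. -/

import Mathlib

/-!
Write `q = |R|`, `a = deg p` and `b = deg (m - p)`. The larger of `a`, `b` is at least `deg m`, and
at most `q ^ (a + 1)` polynomials have degree `a`; so for `1 + α > 0 > 1 + α + β` the sum of
`q ^ (α a + β b)` over `p` is dominated by two geometric series peaking at `a = deg m`, and is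
`≪ q ^ ((1 + α + β) deg m)`. With `α = β = -γ` this bounds the inner sum by
`q ^ ((1 - 2γ) deg (n - x₁))`; squaring and applying the bound again with `α = -γ`,
`β = 2 (1 - 2γ)` bounds the whole sum by `q ^ ((3 - 5γ) deg n)` as soon as `3/5 < γ < 3/4`.
-/

open Polynomial Finset

theorem sum_pow_le_inv_one_sub_of_injOn {ι : Type*} {x : ℝ} (hx0 : 0 ≤ x) (hx1 : x < 1)
    {T : Finset ι} {f : ι → ℕ} (hf : Set.InjOn f T) : ∑ a ∈ T, x ^ f a ≤ (1 - x)⁻¹ := by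
  classical
  rw [← sum_image hf, ← tsum_geometric_of_lt_one hx0 hx1]
  exact (summable_geometric_of_lt_one hx0 hx1).sum_le_tsum _ fun i _ => pow_nonneg hx0 i

theorem exists_sum_rpow_max_le {r α β : ℝ} (hr : 1 < r) (hα : 0 < 1 + α) (hαβ : 1 + α + β < 0) :
    ∃ K > 0, ∀ (M : ℕ) (T : Finset ℕ),
      ∑ a ∈ T, r ^ ((1 + α) * a + β * (max a M : ℕ)) ≤ K * r ^ ((1 + α + β) * M) := by
  have hr0 : 0 < r := one_pos.trans hr
  have hx0 : 0 ≤ r ^ (-(1 + α)) := Real.rpow_nonneg hr0.le _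
  have hy0 : 0 ≤ r ^ (1 + α + β) := Real.rpow_nonneg hr0.le _
  have hx1 : r ^ (-(1 + α)) < 1 := Real.rpow_lt_one_of_one_lt_of_neg hr (by linarith)
  have hy1 : r ^ (1 + α + β) < 1 := Real.rpow_lt_one_of_one_lt_of_neg hr hαβ
  refine ⟨(1 - r ^ (-(1 + α)))⁻¹ + (1 - r ^ (1 + α + β))⁻¹,
    add_pos (inv_pos.2 (by linarith)) (inv_pos.2 (by linarith)), fun M T => ?_⟩
  have hshift (e : ℝ) (k : ℕ) :
      r ^ ((1 + α + β) * M + e * k) = r ^ ((1 + α + β) * M) * (r ^ e) ^ k := by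
    rw [Real.rpow_add hr0, Real.rpow_mul_natCast hr0.le e k]
  have hbelow (a : ℕ) (ha : a ≤ M) : r ^ ((1 + α) * a + β * (max a M : ℕ))
      = r ^ ((1 + α + β) * M) * (r ^ (-(1 + α))) ^ (M - a) := by
    rw [max_eq_right ha, ← hshift, Nat.cast_sub ha]; ring_nf
  have habove (a : ℕ) (ha : M < a) : r ^ ((1 + α) * a + β * (max a M : ℕ))
      = r ^ ((1 + α + β) * M) * (r ^ (1 + α + β)) ^ (a - M) := by
    rw [max_eq_left ha.le, ← hshift, Nat.cast_sub ha.le]; ring_nf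
  have below : ∑ a ∈ T with a ≤ M, r ^ ((1 + α) * a + β * (max a M : ℕ))
      ≤ r ^ ((1 + α + β) * M) * (1 - r ^ (-(1 + α)))⁻¹ := by
    rw [sum_congr rfl fun a ha => hbelow a (mem_filter.1 ha).2, ← mul_sum]
    refine mul_le_mul_of_nonneg_left (sum_pow_le_inv_one_sub_of_injOn hx0 hx1 fun a ha b hb h => ?_)
      (Real.rpow_nonneg hr0.le _)
    have := (mem_filter.1 ha).2; have := (mem_filter.1 hb).2; omega
  have above : ∑ a ∈ T with ¬a ≤ M, r ^ ((1 + α) * a + β * (max a M : ℕ))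
      ≤ r ^ ((1 + α + β) * M) * (1 - r ^ (1 + α + β))⁻¹ := by
    rw [sum_congr rfl fun a ha => habove a (not_le.1 (mem_filter.1 ha).2), ← mul_sum]
    refine mul_le_mul_of_nonneg_left (sum_pow_le_inv_one_sub_of_injOn hy0 hy1 fun a ha b hb h => ?_)
      (Real.rpow_nonneg hr0.le _)
    have := (mem_filter.1 ha).2; have := (mem_filter.1 hb).2; omega
  rw [← sum_filter_add_sum_filter_not T (· ≤ M)]
  linarith

theorem card_le_of_forall_natDegree_le {R : Type*} [Semiring R] [Fintype R] {t : Finset R[X]}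
    {d : ℕ} (ht : ∀ p ∈ t, p.natDegree ≤ d) : t.card ≤ Fintype.card R ^ (d + 1) := by
  have : Finite (degreeLT R (d + 1)) := .of_equiv _ (degreeLTEquiv R (d + 1)).toEquiv.symm
  calc t.card = (t : Set R[X]).ncard := (Set.ncard_coe_finset t).symm
    _ ≤ (degreeLT R (d + 1) : Set R[X]).ncard :=
        Set.ncard_le_ncard (fun p hp => mem_degreeLT.2 <| degree_le_natDegree.trans_lt <|
          WithBot.coe_lt_coe.2 <| Nat.lt_succ_of_le <| ht p hp) (Set.toFinite _)
    _ = Fintype.card R ^ (d + 1) := by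
        rw [← Nat.card_coe_set_eq, SetLike.coe_sort_coe,
          Nat.card_congr (degreeLTEquiv R (d + 1)).toEquiv]
        simp

theorem sum_comp_natDegree_le {R : Type*} [Semiring R] [Fintype R] (s : Finset R[X]) {g : ℕ → ℝ}
    (hg : ∀ a, 0 ≤ g a) :
    ∑ p ∈ s, g p.natDegree ≤ ∑ a ∈ s.image natDegree, (Fintype.card R : ℝ) ^ (a + 1) * g a := by
  classical
  rw [Finset.sum_comp]
  refine sum_le_sum fun a _ => ?_
  rw [nsmul_eq_mul]
  gcongr
  · exact hg a
  · exact_mod_cast card_le_of_forall_natDegree_le fun p hp =>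
      ((mem_filter.1 hp).2 : p.natDegree = a).le

theorem natDegree_le_max_natDegree_sub {R : Type*} [Ring R] (m p : R[X]) :
    m.natDegree ≤ max p.natDegree (m - p).natDegree := by
  simpa using natDegree_add_le p (m - p)

theorem rpow_natDegree_sub_le_add {R : Type*} [Ring R] {r α β : ℝ} (hr : 1 ≤ r) (hα : α ≤ 0)
    (hβ : β ≤ 0) (m p : R[X]) :
    r ^ (α * p.natDegree + β * (m - p).natDegree)
      ≤ r ^ (α * p.natDegree + β * (max p.natDegree m.natDegree : ℕ))
        + r ^ (β * (m - p).natDegree + α * (max (m - p).natDegree m.natDegree : ℕ)) := by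
  have hm := natDegree_le_max_natDegree_sub m p
  have hr0 : 0 ≤ r := zero_le_one.trans hr
  rcases le_total p.natDegree (m - p).natDegree with h | h
  · have hmax : max p.natDegree m.natDegree ≤ (m - p).natDegree := max_le h (by omega)
    refine le_add_of_le_of_nonneg (Real.rpow_le_rpow_of_exponent_le hr ?_) (Real.rpow_nonneg hr0 _)
    exact add_le_add_right (mul_le_mul_of_nonpos_left (Nat.cast_le.2 hmax) hβ) _
  · have hmax : max (m - p).natDegree m.natDegree ≤ p.natDegree := max_le h (by omega)
    refine le_add_of_nonneg_of_le (Real.rpow_nonneg hr0 _) (Real.rpow_le_rpow_of_exponent_le hr ?_)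
    rw [add_comm]
    exact add_le_add_right (mul_le_mul_of_nonpos_left (Nat.cast_le.2 hmax) hα) _

theorem tsum_subtype_le_of_sum_le {ι α : Type*} [AddCommMonoid α] [Preorder α] [TopologicalSpace α]
    [OrderClosedTopology α] {f : ι → α} {c : α} (P : ι → Prop) (hc : 0 ≤ c)
    (h : ∀ s : Finset ι, ∑ i ∈ s, f i ≤ c) : ∑' i : {i // P i}, f i ≤ c :=
  tsum_le_of_sum_le' hc fun s => (sum_map s (Function.Embedding.subtype P) f).symm.trans_le (h _)

section FiniteRing

variable {R : Type*} [Ring R] [Fintype R] [Nontrivial R]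

theorem exists_sum_rpow_natDegree_max_le {α β : ℝ} (hα : 0 < 1 + α) (hαβ : 1 + α + β < 0) :
    ∃ K > 0, ∀ (M : ℕ) (s : Finset R[X]),
      ∑ p ∈ s, (Fintype.card R : ℝ) ^ (α * p.natDegree + β * (max p.natDegree M : ℕ))
        ≤ K * (Fintype.card R : ℝ) ^ ((1 + α + β) * M) := by
  have hq : (1 : ℝ) < Fintype.card R := by exact_mod_cast Fintype.one_lt_card
  have hq0 : (0 : ℝ) < Fintype.card R := one_pos.trans hq
  obtain ⟨K, hK, hsum⟩ := exists_sum_rpow_max_le hq hα hαβ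
  refine ⟨Fintype.card R * K, by positivity, fun M s => ?_⟩
  calc ∑ p ∈ s, (Fintype.card R : ℝ) ^ (α * p.natDegree + β * (max p.natDegree M : ℕ))
      ≤ ∑ a ∈ s.image natDegree,
          (Fintype.card R : ℝ) ^ (a + 1) * (Fintype.card R : ℝ) ^ (α * a + β * (max a M : ℕ)) :=
        sum_comp_natDegree_le s
          (g := fun a => (Fintype.card R : ℝ) ^ (α * a + β * (max a M : ℕ)))
          fun a => Real.rpow_nonneg hq0.le _
    _ = Fintype.card R * ∑ a ∈ s.image natDegree,
          (Fintype.card R : ℝ) ^ ((1 + α) * a + β * (max a M : ℕ)) := by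
        rw [mul_sum]
        refine sum_congr rfl fun a _ => ?_
        rw [pow_succ', ← Real.rpow_natCast, mul_assoc, ← Real.rpow_add hq0]
        ring_nf
    _ ≤ Fintype.card R * K * (Fintype.card R : ℝ) ^ ((1 + α + β) * M) := by
        rw [mul_assoc]
        exact mul_le_mul_of_nonneg_left (hsum M _) hq0.le

theorem exists_sum_rpow_natDegree_sub_le {α β : ℝ} (hα : 0 < 1 + α) (hβ : 0 < 1 + β)
    (hαβ : 1 + α + β < 0) :
    ∃ K > 0, ∀ (m : R[X]) (s : Finset R[X]),
      ∑ p ∈ s, (Fintype.card R : ℝ) ^ (α * p.natDegree + β * (m - p).natDegree)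
        ≤ K * (Fintype.card R : ℝ) ^ ((1 + α + β) * m.natDegree) := by
  classical
  have hq : (1 : ℝ) ≤ Fintype.card R := by exact_mod_cast Fintype.card_pos
  obtain ⟨K₁, hK₁, h₁⟩ := exists_sum_rpow_natDegree_max_le (R := R) hα hαβ
  obtain ⟨K₂, hK₂, h₂⟩ := exists_sum_rpow_natDegree_max_le (R := R) hβ (by linarith : 1 + β + α < 0)
  refine ⟨K₁ + K₂, add_pos hK₁ hK₂, fun m s => ?_⟩
  have hreflect : ∑ p ∈ s, (Fintype.card R : ℝ) ^
        (β * (m - p).natDegree + α * (max (m - p).natDegree m.natDegree : ℕ))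
      = ∑ p ∈ s.image (m - ·), (Fintype.card R : ℝ) ^
        (β * p.natDegree + α * (max p.natDegree m.natDegree : ℕ)) := by
    rw [sum_image fun a _ b _ h => sub_right_injective h]
  calc ∑ p ∈ s, (Fintype.card R : ℝ) ^ (α * p.natDegree + β * (m - p).natDegree)
      ≤ ∑ p ∈ s, ((Fintype.card R : ℝ) ^ (α * p.natDegree + β * (max p.natDegree m.natDegree : ℕ))
          + (Fintype.card R : ℝ) ^
            (β * (m - p).natDegree + α * (max (m - p).natDegree m.natDegree : ℕ))) :=
        sum_le_sum fun p _ => rpow_natDegree_sub_le_add hq (by linarith) (by linarith) m p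
    _ ≤ K₁ * (Fintype.card R : ℝ) ^ ((1 + α + β) * m.natDegree)
          + K₂ * (Fintype.card R : ℝ) ^ ((1 + β + α) * m.natDegree) := by
        rw [sum_add_distrib, hreflect]
        exact add_le_add (h₁ _ s) (h₂ _ _)
    _ = (K₁ + K₂) * (Fintype.card R : ℝ) ^ ((1 + α + β) * m.natDegree) := by
        rw [add_right_comm 1 β α]; ring

theorem exists_tsum_rpow_natDegree_add_sub_le {γ : ℝ} (hγ₁ : 1 / 2 < γ) (hγ₂ : γ < 1) :
    ∃ K > 0, ∀ (m : R[X]) (P : R[X] → Prop),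
      ∑' x : {x // P x}, (Fintype.card R : ℝ) ^ (-γ * ((x : R[X]).natDegree + (m - x).natDegree))
        ≤ K * (Fintype.card R : ℝ) ^ ((1 - 2 * γ) * m.natDegree) := by
  obtain ⟨K, hK, hsum⟩ := exists_sum_rpow_natDegree_sub_le (R := R) (α := -γ) (β := -γ)
    (by linarith) (by linarith) (by linarith)
  refine ⟨K, hK, fun m P => tsum_subtype_le_of_sum_le (f := fun x =>
    (Fintype.card R : ℝ) ^ (-γ * (x.natDegree + (m - x).natDegree))) P (by positivity) fun s => ?_⟩
  simp only [mul_add]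
  exact (hsum m s).trans_eq (by ring_nf)

theorem exists_tsum_rpow_mul_sq_tsum_le {γ : ℝ} (hγ₁ : 3 / 5 < γ) (hγ₂ : γ < 3 / 4) :
    ∃ C > 0, ∀ n : R[X],
      ∑' x1 : {x : R[X] // x ≠ 0}, (Fintype.card R : ℝ) ^ (-γ * (x1 : R[X]).natDegree) *
        (∑' x2 : {x : R[X] // x ≠ 0 ∧ n - x1 - x ≠ 0}, (Fintype.card R : ℝ) ^
          (-γ * ((x2 : R[X]).natDegree + (n - x1 - x2).natDegree))) ^ 2
        ≤ C * (Fintype.card R : ℝ) ^ ((3 - 5 * γ) * n.natDegree) := by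
  have hq : (0 : ℝ) < Fintype.card R := Nat.cast_pos.2 Fintype.card_pos
  obtain ⟨K, hK, hinner⟩ := exists_tsum_rpow_natDegree_add_sub_le (R := R) (γ := γ)
    (by linarith) (by linarith)
  obtain ⟨L, hL, houter⟩ := exists_sum_rpow_natDegree_sub_le (R := R)
    (α := -γ) (β := 2 * (1 - 2 * γ)) (by linarith) (by linarith) (by linarith)
  refine ⟨K ^ 2 * L, by positivity, fun n => tsum_subtype_le_of_sum_le (f := fun x =>
    (Fintype.card R : ℝ) ^ (-γ * x.natDegree) * (∑' y : {y : R[X] // y ≠ 0 ∧ n - x - y ≠ 0},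
      (Fintype.card R : ℝ) ^ (-γ * ((y : R[X]).natDegree + (n - x - y).natDegree))) ^ 2)
    _ (by positivity) fun s => ?_⟩
  calc _ ≤ ∑ x ∈ s, (Fintype.card R : ℝ) ^ (-γ * x.natDegree) *
        (K * (Fintype.card R : ℝ) ^ ((1 - 2 * γ) * (n - x).natDegree)) ^ 2 := by
        gcongr with x
        exact hinner (n - x) _
    _ = K ^ 2 * ∑ x ∈ s,
          (Fintype.card R : ℝ) ^ (-γ * x.natDegree + 2 * (1 - 2 * γ) * (n - x).natDegree) := by
        rw [mul_sum]
        refine sum_congr rfl fun x _ => ?_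
        rw [mul_pow, ← Real.rpow_mul_natCast hq.le, mul_left_comm, ← Real.rpow_add hq]
        ring_nf
    _ ≤ K ^ 2 * (L * (Fintype.card R : ℝ) ^ ((1 + -γ + 2 * (1 - 2 * γ)) * n.natDegree)) := by
        gcongr
        exact houter n s
    _ = K ^ 2 * L * (Fintype.card R : ℝ) ^ ((3 - 5 * γ) * n.natDegree) := by ring_nf

end FiniteRing

/-- Key bound `Δ(Q_n) ≪ q^{-(2/11) deg n}`: with `γ = 7/11`, for all nonzero
`n ∈ F_q[t]` of sufficiently large degree,
`∑_{x1 ≠ 0} q^{-γ deg x1} (∑_{x2+x3 = n - x1, x2 x3 ≠ 0} q^{-γ(deg x2 + deg x3)})²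
  ≤ C q^{(3-5γ) deg n} = C q^{-(2/11) deg n}`. -/
theorem stmt_18 (F : Type*) [Field F] [Fintype F] :
    ∃ C : ℝ, 0 < C ∧ ∃ D : ℕ, ∀ n : Polynomial F, n ≠ 0 → D ≤ n.natDegree →
      ∑' x1 : {x : Polynomial F // x ≠ 0},
          (Fintype.card F : ℝ) ^ (-(7 / 11 : ℝ) * (((x1 : Polynomial F)).natDegree : ℝ)) *
            (∑' x2 : {x : Polynomial F // x ≠ 0 ∧ n - (x1 : Polynomial F) - x ≠ 0},
              (Fintype.card F : ℝ) ^ (-(7 / 11 : ℝ) *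
                (((x2 : Polynomial F).natDegree : ℝ) +
                  ((n - (x1 : Polynomial F) - (x2 : Polynomial F)).natDegree : ℝ)))) ^ 2
        ≤ C * (Fintype.card F : ℝ) ^ ((3 - 5 * (7 / 11 : ℝ)) * (n.natDegree : ℝ)) := by
  obtain ⟨C, hC, hbound⟩ := exists_tsum_rpow_mul_sq_tsum_le (R := F) (γ := 7 / 11)
    (by norm_num) (by norm_num)
  exact ⟨C, hC, 0, fun n _ _ => hbound n⟩
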